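/- Fix σ ∈ (0,2), m ≥ 1 such that s ↦ m s^{m−1} is Lipschitz on [0,B] with constant L, T > 0, a > 0, Δx > 0, Δt > 0, integers I, K ≥ 2, J ≥ 1 with JΔt = T, and constants B, C₁, C₂, C₃, C₄, C₅ ≥ 0. Let u assign a value u_j^{i,k} ∈ [0,B] to each grid node (i,k) (0 ≤ i ≤ I, 0 ≤ k ≤ K) and each time 0 ≤ j ≤ J (the values of the exact solution of the whole-space problem), and let U_j^{i,k} ∈ [0,B] be numbers with U_j^{i,k} = 0 whenever (i,k) is a node of the lateral/top boundary Γ_h (the scheme, posed with zero lateral data). Assume: (i) CFL: ν_σ m B^{m−1} Δt ≤ Δx^σ; (ii) scheme: for 1 ≤ j ≤ J and 0 < i < I, U_j^{i,0} = U_{j−1}^{i,0} + ν_σ (Δt/Δx^σ)((U_{j−1}^{i,1})^m − (U_{j−1}^{i,0})^m); (iii) truncation: |u_j^{i,0} − u_{j−1}^{i,0} − ν_σ (Δt/Δx^σ)((u_{j−1}^{i,1})^m − (u_{j−1}^{i,0})^m)| ≤ C₁ Δt (Δt + Δx^{2−σ}) for all 1 ≤ j ≤ J and 0 < i < I; (iv)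 error propagation: for every j, max over all nodes of |u_j^{i,k} − U_j^{i,k}| ≤ max(max over 0 < i < I of |u_j^{i,0} − U_j^{i,0}|, max over Γ_h nodes of |u_j^{i,k} − U_j^{i,k}|) + C₂ Δx^a; (v) lateral smallness: |u_j^{i,k}| ≤ C₅ Δx^a at every node of Γ_h and every j (which holds when the exact solution obeys the Barenblatt-type decay u ≤ C t^{βσ}|x|^{−(N+σ)} and the domain satisfies X ≥ L₀ Δx^{−a/(N+σ)}); (vi) spatial regularity: |u_j^{i,1} − u_j^{i,0}| ≤ C₃ Δx^σ and |U_j^{i,1} − U_j^{i,0}| ≤ C₃ Δx^σ for all i, j; (vii) initial error: max over all nodes of |u_0^{i,k} − U_0^{i,k}| ≤ C₄ Δx^a. Then there exists a constant C, depending only on σ, m, L, T, B, ν_σ and C₁,…,C₅ (but not on Δx, Δt, I, K, J), such that max over all i, k, j of |u_j^{i,k} − U_j^{i,k}| ≤ C (Δt + Δx^{2−σ} + Δx^a/Δt). -/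

import Mathlib

/-!
Write `e = u - U`. At an interior bottom node, subtracting the scheme from the truncation bound
leaves `e₀ + μ ((u₁^m - u₀^m) - (U₁^m - U₀^m))`, `μ = ν_σ Δt / Δx^σ`. A mean value theorem taken
simultaneously along the segments `[u₀, u₁]` and `[U₀, U₁]` rewrites it as
`(1 - μ c') e₀ + μ c' e₁ + μ (c - c') (u₁ - u₀)`, where `c, c'` are values of `s ↦ m s^(m-1)` at
matching points. Under the CFL condition the first two terms form a convex combination, and the
Lipschitz bound with the spatial regularity `|u₁ - u₀| ≤ C₃ Δx^σ` makes the last one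
`O(Δt) ‖e‖`. The propagation hypothesis spreads the interior bound to every node at cost
`C₂ Δx^a`; on `Γ_h` the error is `|u| ≤ C₅ Δx^a` because `U` vanishes there. The discrete Grönwall
inequality over `J = T / Δt` steps then bounds the error by
`exp(γ T) (C₄ Δx^a + J (C₁ Δt (Δt + Δx^(2-σ)) + (C₂ + C₅) Δx^a))`, and `J Δx^a = T Δx^a / Δt`.
-/

/-- `ν_σ = σ μ_σ` with `μ_σ = 2^{σ-1} Γ(σ/2) / Γ(1-σ/2)`. -/
noncomputable def nuSigma (σ : ℝ) : ℝ :=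
  σ * (2 ^ (σ - 1) * Real.Gamma (σ / 2) / Real.Gamma (1 - σ / 2))

open Real Set NNReal Finset

lemma nuSigma_pos {σ : ℝ} (hσ : σ ∈ Ioo (0 : ℝ) 2) : 0 < nuSigma σ := by
  have hσ₀ := hσ.1
  have hΓ₁ : 0 < Gamma (σ / 2) := Gamma_pos_of_pos (by linarith)
  have hΓ₂ : 0 < Gamma (1 - σ / 2) := Gamma_pos_of_pos (by linarith [hσ.2])
  unfold nuSigma
  positivity

lemma exists_sub_sub_eq_mul_deriv_sub_mul_deriv {f f' : ℝ → ℝ} {B : ℝ}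
    (hf : ∀ x ∈ Icc 0 B, HasDerivAt f (f' x) x) {a b a' b' : ℝ}
    (ha : a ∈ Icc 0 B) (hb : b ∈ Icc 0 B) (ha' : a' ∈ Icc 0 B) (hb' : b' ∈ Icc 0 B) :
    ∃ θ ∈ Icc (0 : ℝ) 1, (f b - f a) - (f b' - f a') =
      (b - a) * f' (a + θ * (b - a)) - (b' - a') * f' (a' + θ * (b' - a')) := by
  have hderiv : ∀ θ ∈ Icc (0 : ℝ) 1,
      HasDerivAt (fun t => f (a + t * (b - a)) - f (a' + t * (b' - a')))
        ((b - a) * f' (a + θ * (b - a)) - (b' - a') * f' (a' + θ * (b' - a'))) θ := by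
    intro θ hθ
    have hpath : ∀ x y : ℝ, HasDerivAt (fun t => x + t * (y - x)) (y - x) θ := fun x y => by
      simpa using ((hasDerivAt_id θ).mul_const (y - x)).const_add x
    have h₁ := (hf _ ((convex_Icc 0 B).add_smul_sub_mem ha hb hθ)).comp θ (hpath a b)
    have h₂ := (hf _ ((convex_Icc 0 B).add_smul_sub_mem ha' hb' hθ)).comp θ (hpath a' b')
    exact (h₁.sub h₂).congr_deriv (by simp only [smul_eq_mul]; ring)
  obtain ⟨θ, hθ, hslope⟩ := exists_hasDerivAt_eq_slope _ _ zero_lt_one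
    (fun t ht => (hderiv t ht).continuousAt.continuousWithinAt)
    (fun t ht => hderiv t (Ioo_subset_Icc_self ht))
  refine ⟨θ, Ioo_subset_Icc_self hθ, ?_⟩
  rw [hslope]
  simp only [one_mul, zero_mul, add_zero, add_sub_cancel, sub_zero, div_one]
  ring

lemma abs_explicit_step_sub_le {f f' : ℝ → ℝ} {B D μ δ M : ℝ} {K : ℝ≥0}
    (hf : ∀ x ∈ Icc 0 B, HasDerivAt f (f' x) x) (hf' : MapsTo f' (Icc 0 B) (Icc 0 D))
    (hK : LipschitzOnWith K f' (Icc 0 B)) (hμ : 0 ≤ μ) (hCFL : μ * D ≤ 1)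
    {a b a' b' : ℝ} (ha : a ∈ Icc 0 B) (hb : b ∈ Icc 0 B) (ha' : a' ∈ Icc 0 B)
    (hb' : b' ∈ Icc 0 B) (haa' : |a - a'| ≤ M) (hbb' : |b - b'| ≤ M) (hba : |b - a| ≤ δ) :
    |(a - a') + μ * ((f b - f a) - (f b' - f a'))| ≤ (1 + μ * K * δ) * M := by
  obtain ⟨θ, hθ, hmvt⟩ := exists_sub_sub_eq_mul_deriv_sub_mul_deriv hf ha hb ha' hb'
  set p := a + θ * (b - a)
  set p' := a' + θ * (b' - a')
  have hp : p ∈ Icc 0 B := (convex_Icc 0 B).add_smul_sub_mem ha hb hθ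
  have hp' : p' ∈ Icc 0 B := (convex_Icc 0 B).add_smul_sub_mem ha' hb' hθ
  have hM : 0 ≤ M := (abs_nonneg _).trans haa'
  have hpp' : |p - p'| ≤ M := by
    have hθ' : 0 ≤ 1 - θ := sub_nonneg.2 hθ.2
    calc |p - p'| = |(1 - θ) * (a - a') + θ * (b - b')| := by simp only [p, p']; ring_nf
      _ ≤ (1 - θ) * |a - a'| + θ * |b - b'| := (abs_add_le _ _).trans_eq <| by
        rw [abs_mul, abs_mul, abs_of_nonneg hθ', abs_of_nonneg hθ.1]
      _ ≤ (1 - θ) * M + θ * M := by gcongr; exact hθ.1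
      _ = M := by ring
  have hc : |f' p - f' p'| ≤ K * M := by
    have hdist := hK.dist_le_mul p hp p' hp'
    rw [Real.dist_eq, Real.dist_eq] at hdist
    exact hdist.trans (by gcongr)
  obtain ⟨hc'₀, hc'D⟩ := hf' hp'
  have hμc' : μ * f' p' ≤ 1 := (mul_le_mul_of_nonneg_left hc'D hμ).trans hCFL
  calc |(a - a') + μ * ((f b - f a) - (f b' - f a'))|
      = |(1 - μ * f' p') * (a - a') + μ * f' p' * (b - b') + μ * (f' p - f' p') * (b - a)| := by
        rw [hmvt]; ring_nf
    _ ≤ |(1 - μ * f' p') * (a - a')| + |μ * f' p' * (b - b')| + |μ * (f' p - f' p') * (b - a)| :=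
        abs_add_three _ _ _
    _ ≤ (1 - μ * f' p') * M + μ * f' p' * M + μ * (K * M) * δ := by
        simp only [abs_mul, abs_of_nonneg (sub_nonneg.2 hμc'), abs_of_nonneg hμ,
          abs_of_nonneg hc'₀]
        gcongr
    _ = (1 + μ * K * δ) * M := by ring

lemma abs_rpow_explicit_step_sub_le {m B L μ δ M : ℝ} (hm : 1 ≤ m)
    (hLip : ∀ s ∈ Icc (0 : ℝ) B, ∀ t ∈ Icc (0 : ℝ) B,
      |m * s ^ (m - 1) - m * t ^ (m - 1)| ≤ L * |s - t|)
    (hμ : 0 ≤ μ) (hCFL : μ * (m * B ^ (m - 1)) ≤ 1)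
    {a b a' b' : ℝ} (ha : a ∈ Icc 0 B) (hb : b ∈ Icc 0 B) (ha' : a' ∈ Icc 0 B)
    (hb' : b' ∈ Icc 0 B) (haa' : |a - a'| ≤ M) (hbb' : |b - b'| ≤ M) (hba : |b - a| ≤ δ) :
    |(a - a') + μ * ((b ^ m - a ^ m) - (b' ^ m - a' ^ m))| ≤ (1 + μ * L.toNNReal * δ) * M := by
  have hderiv : ∀ x ∈ Icc (0 : ℝ) B, HasDerivAt (· ^ m) (m * x ^ (m - 1)) x :=
    fun _ _ => hasDerivAt_rpow_const (Or.inr hm)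
  have hmaps : MapsTo (fun x => m * x ^ (m - 1)) (Icc 0 B) (Icc 0 (m * B ^ (m - 1))) :=
    fun x hx => ⟨by have := hx.1; positivity,
      mul_le_mul_of_nonneg_left (rpow_le_rpow hx.1 hx.2 (by linarith)) (by linarith)⟩
  have hlip : LipschitzOnWith L.toNNReal (fun x => m * x ^ (m - 1)) (Icc 0 B) :=
    .of_dist_le' fun s hs t ht => by simpa only [Real.dist_eq] using hLip s hs t ht
  exact abs_explicit_step_sub_le hderiv hmaps hlip hμ hCFL ha hb ha' hb' haa' hbb' hba

lemma abs_sub_le_add_abs_explicit_step {g : ℝ → ℝ} {μ τ x₀ x₁ x y₀ y₁ y : ℝ}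
    (hy : y = y₀ + μ * (g y₁ - g y₀)) (hx : |x - x₀ - μ * (g x₁ - g x₀)| ≤ τ) :
    |x - y| ≤ τ + |(x₀ - y₀) + μ * ((g x₁ - g x₀) - (g y₁ - g y₀))| :=
  calc |x - y| = |(x - x₀ - μ * (g x₁ - g x₀)) +
        ((x₀ - y₀) + μ * ((g x₁ - g x₀) - (g y₁ - g y₀)))| := by rw [hy]; ring_nf
    _ ≤ τ + |(x₀ - y₀) + μ * ((g x₁ - g x₀) - (g y₁ - g y₀))| :=
        (abs_add_le _ _).trans (by gcongr)

lemma abs_sub_le_of_interior_le {I K : ℕ} {u U : ℕ → ℕ → ℝ} {ρ c ε : ℝ} (hρ : 0 ≤ ρ)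
    (hprop : ∀ i ≤ I, ∀ k ≤ K,
      (∃ i', 0 < i' ∧ i' < I ∧ |u i k - U i k| ≤ |u i' 0 - U i' 0| + c)
      ∨ (∃ i' k', i' ≤ I ∧ k' ≤ K ∧ (i' = 0 ∨ i' = I ∨ k' = K) ∧
          |u i k - U i k| ≤ |u i' k' - U i' k'| + c))
    (hU : ∀ i ≤ I, ∀ k ≤ K, (i = 0 ∨ i = I ∨ k = K) → U i k = 0)
    (hu : ∀ i ≤ I, ∀ k ≤ K, (i = 0 ∨ i = I ∨ k = K) → |u i k| ≤ ε)
    (hint : ∀ i, 0 < i → i < I → |u i 0 - U i 0| ≤ ρ) :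
    ∀ i ≤ I, ∀ k ≤ K, |u i k - U i k| ≤ ρ + (ε + c) := by
  have hε : 0 ≤ ε := (abs_nonneg _).trans (hu 0 (Nat.zero_le _) 0 (Nat.zero_le _) (Or.inl rfl))
  intro i hi k hk
  rcases hprop i hi k hk with ⟨i', hi'₀, hi'I, hle⟩ | ⟨i', k', hi', hk', hΓ, hle⟩
  · linarith [hint i' hi'₀ hi'I]
  · rw [hU i' hi' k' hk' hΓ, sub_zero] at hle
    linarith [hu i' hi' k' hk' hΓ]

noncomputable def gridMaxNorm (I K : ℕ) (e : ℕ → ℕ → ℝ) : ℝ :=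
  (range (I + 1) ×ˢ range (K + 1)).sup' (nonempty_range_add_one.product nonempty_range_add_one)
    fun p => |e p.1 p.2|

section gridMaxNorm

variable {I K : ℕ} {e : ℕ → ℕ → ℝ}

lemma abs_le_gridMaxNorm {i k : ℕ} (hi : i ≤ I) (hk : k ≤ K) : |e i k| ≤ gridMaxNorm I K e :=
  le_sup' (fun p : ℕ × ℕ => |e p.1 p.2|) (b := (i, k))
    (by simp only [mem_product, Finset.mem_range]; omega)

lemma gridMaxNorm_nonneg : 0 ≤ gridMaxNorm I K e :=
  (abs_nonneg _).trans (abs_le_gridMaxNorm (e := e) (Nat.zero_le I) (Nat.zero_le K))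

lemma gridMaxNorm_le {r : ℝ} (h : ∀ i ≤ I, ∀ k ≤ K, |e i k| ≤ r) : gridMaxNorm I K e ≤ r :=
  sup'_le _ _ fun p hp => by
    simp only [mem_product, Finset.mem_range] at hp
    exact h _ (by omega) _ (by omega)

end gridMaxNorm

lemma gridMaxNorm_error_step_le {I K : ℕ} {m B L μ δ τ c ε : ℝ} {u₀ U₀ u₁ U₁ : ℕ → ℕ → ℝ}
    (hm : 1 ≤ m) (hLip : ∀ s ∈ Icc (0 : ℝ) B, ∀ t ∈ Icc (0 : ℝ) B,
      |m * s ^ (m - 1) - m * t ^ (m - 1)| ≤ L * |s - t|)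
    (hμ : 0 ≤ μ) (hCFL : μ * (m * B ^ (m - 1)) ≤ 1) (hτ : 0 ≤ τ) (hK : 1 ≤ K)
    (hu₀ : ∀ i ≤ I, ∀ k ≤ K, u₀ i k ∈ Icc 0 B) (hU₀ : ∀ i ≤ I, ∀ k ≤ K, U₀ i k ∈ Icc 0 B)
    (hscheme : ∀ i, 0 < i → i < I → U₁ i 0 = U₀ i 0 + μ * (U₀ i 1 ^ m - U₀ i 0 ^ m))
    (htrunc : ∀ i, 0 < i → i < I → |u₁ i 0 - u₀ i 0 - μ * (u₀ i 1 ^ m - u₀ i 0 ^ m)| ≤ τ)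
    (hreg : ∀ i ≤ I, |u₀ i 1 - u₀ i 0| ≤ δ)
    (hprop : ∀ i ≤ I, ∀ k ≤ K,
      (∃ i', 0 < i' ∧ i' < I ∧ |u₁ i k - U₁ i k| ≤ |u₁ i' 0 - U₁ i' 0| + c)
      ∨ (∃ i' k', i' ≤ I ∧ k' ≤ K ∧ (i' = 0 ∨ i' = I ∨ k' = K) ∧
          |u₁ i k - U₁ i k| ≤ |u₁ i' k' - U₁ i' k'| + c))
    (hU₁ : ∀ i ≤ I, ∀ k ≤ K, (i = 0 ∨ i = I ∨ k = K) → U₁ i k = 0)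
    (hu₁ : ∀ i ≤ I, ∀ k ≤ K, (i = 0 ∨ i = I ∨ k = K) → |u₁ i k| ≤ ε) :
    gridMaxNorm I K (fun i k => u₁ i k - U₁ i k) ≤
      (1 + μ * L.toNNReal * δ) * gridMaxNorm I K (fun i k => u₀ i k - U₀ i k) + (τ + (ε + c)) := by
  set r := gridMaxNorm I K fun i k => u₀ i k - U₀ i k
  have hr : 0 ≤ r := gridMaxNorm_nonneg
  have hδ : 0 ≤ δ := (abs_nonneg _).trans (hreg 0 (Nat.zero_le I))
  have hint : ∀ i, 0 < i → i < I → |u₁ i 0 - U₁ i 0| ≤ τ + (1 + μ * L.toNNReal * δ) * r := by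
    intro i hi₀ hiI
    have hi := hiI.le
    refine (abs_sub_le_add_abs_explicit_step (g := (· ^ m)) (hscheme i hi₀ hiI)
      (htrunc i hi₀ hiI)).trans (add_le_add le_rfl ?_)
    exact abs_rpow_explicit_step_sub_le hm hLip hμ hCFL (hu₀ i hi 0 (Nat.zero_le K))
      (hu₀ i hi 1 hK) (hU₀ i hi 0 (Nat.zero_le K)) (hU₀ i hi 1 hK)
      (abs_le_gridMaxNorm (e := fun i k => u₀ i k - U₀ i k) hi (Nat.zero_le K))
      (abs_le_gridMaxNorm (e := fun i k => u₀ i k - U₀ i k) hi hK) (hreg i hi)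
  refine gridMaxNorm_le fun i hi k hk => ?_
  exact (abs_sub_le_of_interior_le (by positivity) hprop hU₁ hu₁ hint i hi k hk).trans_eq
    (by ring)

lemma discrete_gronwall_const_of_le {J j : ℕ} {b c : ℝ} {e : ℕ → ℝ} (he : ∀ n, 0 ≤ e n)
    (hb : 0 ≤ b) (hc : 0 ≤ c) (hstep : ∀ n < J, e (n + 1) ≤ (1 + c) * e n + b) (hj : j ≤ J) :
    e j ≤ (e 0 + j * b) * exp (j * c) := by
  -- freezing `e` after time `J` makes the recursion hold for all `n`
  have hfrozen : ∀ n, e (min (n + 1) J) ≤ (1 + c) * e (min n J) + b := by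
    intro n
    rcases lt_or_ge n J with hn | hn
    · rw [min_eq_left hn.le, min_eq_left hn]
      exact hstep n hn
    · rw [min_eq_right hn, min_eq_right (hn.trans n.le_succ)]
      nlinarith [he J]
  have := discrete_gronwall (u := fun n => e (min n J)) (he _) (fun n _ => hfrozen n)
    (fun _ _ => hc) (fun _ _ => hb) (Nat.zero_le j)
  simpa [min_eq_left hj, sum_const] using this

lemma gronwall_bound_le_rate {γ T Δt y z C₁ C₂ C₄ C₅ : ℝ} {j J : ℕ} (hγ : 0 ≤ γ) (hΔt : 0 < Δt)
    (hy : 0 ≤ y) (hz : 0 ≤ z) (hC₁ : 0 ≤ C₁) (hC₂ : 0 ≤ C₂) (hC₄ : 0 ≤ C₄) (hC₅ : 0 ≤ C₅)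
    (hJ : 1 ≤ J) (hJT : J * Δt = T) (hj : j ≤ J) :
    (C₄ * z + j * (C₁ * Δt * (Δt + y) + (C₅ * z + C₂ * z))) * exp (j * (γ * Δt)) ≤
      exp (γ * T) * T * (C₁ + C₂ + C₄ + C₅) * (Δt + y + z / Δt) := by
  have hjJ : (j : ℝ) ≤ J := by exact_mod_cast hj
  have hΔtT : Δt ≤ T := by
    rw [← hJT]; exact le_mul_of_one_le_left hΔt.le (by exact_mod_cast hJ)
  have hz' : z ≤ T * (z / Δt) := by
    rw [mul_div_assoc', le_div_iff₀ hΔt, mul_comm z]; exact mul_le_mul_of_nonneg_right hΔtT hz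
  have hJP : C₄ * z + J * (C₁ * Δt * (Δt + y) + (C₅ * z + C₂ * z)) =
      C₄ * z + T * (C₁ * (Δt + y) + (C₅ + C₂) * (z / Δt)) := by
    rw [← hJT]; field_simp
  have hzΔt : 0 ≤ z / Δt := by positivity
  calc (C₄ * z + j * (C₁ * Δt * (Δt + y) + (C₅ * z + C₂ * z))) * exp (j * (γ * Δt))
      ≤ (C₄ * z + J * (C₁ * Δt * (Δt + y) + (C₅ * z + C₂ * z))) * exp (γ * T) := by
        have hexp : (j : ℝ) * (γ * Δt) ≤ γ * T := by
          rw [← hJT]; nlinarith [mul_nonneg hγ hΔt.le]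
        gcongr
    _ ≤ T * (C₁ + C₂ + C₄ + C₅) * (Δt + y + z / Δt) * exp (γ * T) := by
        have hT : 0 ≤ T := hΔt.le.trans hΔtT
        have hdiff : T * (C₁ + C₂ + C₄ + C₅) * (Δt + y + z / Δt) -
            (C₄ * z + T * (C₁ * (Δt + y) + (C₅ + C₂) * (z / Δt))) =
            C₄ * (T * (z / Δt) - z) + T * (C₁ * (z / Δt) + (C₂ + C₄ + C₅) * (Δt + y)) := by ring
        have : 0 ≤ C₄ * (T * (z / Δt) - z) + T * (C₁ * (z / Δt) + (C₂ + C₄ + C₅) * (Δt + y)) :=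
          add_nonneg (mul_nonneg hC₄ (sub_nonneg.2 hz')) (by positivity)
        rw [hJP]
        gcongr
        linarith
    _ = exp (γ * T) * T * (C₁ + C₂ + C₄ + C₅) * (Δt + y + z / Δt) := by ring

theorem stmt19_general (σ m L T B a C₁ C₂ C₃ C₄ C₅ : ℝ)
    (hσ : σ ∈ Set.Ioo (0:ℝ) 2) (hm : 1 ≤ m)
    (hLip : ∀ s ∈ Set.Icc (0:ℝ) B, ∀ t ∈ Set.Icc (0:ℝ) B,
      |m * s ^ (m - 1) - m * t ^ (m - 1)| ≤ L * |s - t|)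
    (hT : 0 < T)
    (hC₁ : 0 ≤ C₁) (hC₂ : 0 ≤ C₂) (hC₃ : 0 ≤ C₃) (hC₄ : 0 ≤ C₄) (hC₅ : 0 ≤ C₅) :
    ∃ C > 0, ∀ (Δx Δt : ℝ) (I K J : ℕ) (u U : ℕ → ℕ → ℕ → ℝ),
      0 < Δx → 0 < Δt → 2 ≤ I → 2 ≤ K → 1 ≤ J → (J : ℝ) * Δt = T →
      (∀ j ≤ J, ∀ i ≤ I, ∀ k ≤ K, u j i k ∈ Set.Icc (0:ℝ) B) →
      (∀ j ≤ J, ∀ i ≤ I, ∀ k ≤ K, U j i k ∈ Set.Icc (0:ℝ) B) →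
      -- zero lateral data for the scheme
      (∀ j ≤ J, ∀ i ≤ I, ∀ k ≤ K, (i = 0 ∨ i = I ∨ k = K) → U j i k = 0) →
      -- (i) CFL
      nuSigma σ * m * B ^ (m - 1) * Δt ≤ Δx ^ σ →
      -- (ii) scheme
      (∀ j, 1 ≤ j → j ≤ J → ∀ i, 0 < i → i < I →
        U j i 0 = U (j-1) i 0
          + nuSigma σ * (Δt / Δx ^ σ) * ((U (j-1) i 1) ^ m - (U (j-1) i 0) ^ m)) →
      -- (iii) truncation
      (∀ j, 1 ≤ j → j ≤ J → ∀ i, 0 < i → i < I →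
        |u j i 0 - u (j-1) i 0
            - nuSigma σ * (Δt / Δx ^ σ) * ((u (j-1) i 1) ^ m - (u (j-1) i 0) ^ m)|
          ≤ C₁ * Δt * (Δt + Δx ^ (2 - σ))) →
      -- (iv) error propagation
      (∀ j ≤ J, ∀ i ≤ I, ∀ k ≤ K,
        (∃ i', 0 < i' ∧ i' < I ∧
          |u j i k - U j i k| ≤ |u j i' 0 - U j i' 0| + C₂ * Δx ^ a)
        ∨ (∃ i' k', i' ≤ I ∧ k' ≤ K ∧ (i' = 0 ∨ i' = I ∨ k' = K) ∧
          |u j i k - U j i k| ≤ |u j i' k' - U j i' k'| + C₂ * Δx ^ a)) →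
      -- (v) lateral smallness of the exact solution
      (∀ j ≤ J, ∀ i ≤ I, ∀ k ≤ K, (i = 0 ∨ i = I ∨ k = K) → |u j i k| ≤ C₅ * Δx ^ a) →
      -- (vi) spatial regularity
      (∀ j ≤ J, ∀ i ≤ I,
        |u j i 1 - u j i 0| ≤ C₃ * Δx ^ σ ∧ |U j i 1 - U j i 0| ≤ C₃ * Δx ^ σ) →
      -- (vii) initial error
      (∀ i ≤ I, ∀ k ≤ K, |u 0 i k - U 0 i k| ≤ C₄ * Δx ^ a) →
      ∀ j ≤ J, ∀ i ≤ I, ∀ k ≤ K,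
        |u j i k - U j i k| ≤ C * (Δt + Δx ^ (2 - σ) + Δx ^ a / Δt) := by
  have hν := nuSigma_pos hσ
  set γ := nuSigma σ * L.toNNReal * C₃
  refine ⟨exp (γ * T) * T * (C₁ + C₂ + C₄ + C₅ + 1), by positivity, ?_⟩
  intro Δx Δt I K J u U hΔx hΔt _ hK hJ hJT hu hU hU0 hCFL hscheme htrunc hprop hlat hreg hinit
  have hμ : 0 ≤ nuSigma σ * (Δt / Δx ^ σ) := by positivity
  have hμCFL : nuSigma σ * (Δt / Δx ^ σ) * (m * B ^ (m - 1)) ≤ 1 := by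
    rw [show nuSigma σ * (Δt / Δx ^ σ) * (m * B ^ (m - 1)) =
      nuSigma σ * m * B ^ (m - 1) * Δt / Δx ^ σ by ring, div_le_one (by positivity)]
    exact hCFL
  have hμδ : nuSigma σ * (Δt / Δx ^ σ) * L.toNNReal * (C₃ * Δx ^ σ) = γ * Δt := by
    simp only [γ]; field_simp
  set P := C₁ * Δt * (Δt + Δx ^ (2 - σ)) + (C₅ * Δx ^ a + C₂ * Δx ^ a)
  have hP : 0 ≤ P := by positivity
  set e : ℕ → ℝ := fun n => gridMaxNorm I K fun i k => u n i k - U n i k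
  have hstep : ∀ n < J, e (n + 1) ≤ (1 + γ * Δt) * e n + P := fun n hn => by
    rw [← hμδ]
    exact gridMaxNorm_error_step_le hm hLip hμ hμCFL (by positivity) (by omega)
      (hu n hn.le) (hU n hn.le) (hscheme (n + 1) le_add_self hn) (htrunc (n + 1) le_add_self hn)
      (fun i hi => (hreg n hn.le i hi).1) (hprop (n + 1) hn) (hU0 (n + 1) hn) (hlat (n + 1) hn)
  intro j hj i hi k hk
  have he₀ : e 0 ≤ C₄ * Δx ^ a := gridMaxNorm_le hinit
  calc |u j i k - U j i k| ≤ e j := abs_le_gridMaxNorm (e := fun i k => u j i k - U j i k) hi hk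
    _ ≤ (e 0 + j * P) * exp (j * (γ * Δt)) :=
        discrete_gronwall_const_of_le (fun _ => gridMaxNorm_nonneg) hP (by positivity) hstep hj
    _ ≤ (C₄ * Δx ^ a + j * P) * exp (j * (γ * Δt)) := by gcongr
    _ ≤ _ := gronwall_bound_le_rate (by positivity) hΔt (by positivity) (by positivity)
        hC₁ hC₂ hC₄ hC₅ hJ hJT hj
    _ ≤ _ := by gcongr exp (γ * T) * T * ?_ * _; linarith

/-- Convergence of the bounded-domain scheme (zero lateral data) to
the whole-space solution (Section 7): with the additional hypothesis that the exact
solution is of size `O(Δx^a)` on the lateral/top boundary `Γ_h`, the total error is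
again `O(Δt + Δx^{2-σ} + Δx^a/Δt)`, with a constant independent of `Δx, Δt, I, K, J`. -/
theorem stmt19 (σ m L T B a C₁ C₂ C₃ C₄ C₅ : ℝ)
    (hσ : σ ∈ Set.Ioo (0:ℝ) 2) (hm : 1 ≤ m)
    (hLip : ∀ s ∈ Set.Icc (0:ℝ) B, ∀ t ∈ Set.Icc (0:ℝ) B,
      |m * s ^ (m - 1) - m * t ^ (m - 1)| ≤ L * |s - t|)
    (hT : 0 < T) (ha : 0 < a) (hB : 0 ≤ B)
    (hC₁ : 0 ≤ C₁) (hC₂ : 0 ≤ C₂) (hC₃ : 0 ≤ C₃) (hC₄ : 0 ≤ C₄) (hC₅ : 0 ≤ C₅) :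
    ∃ C > 0, ∀ (Δx Δt : ℝ) (I K J : ℕ) (u U : ℕ → ℕ → ℕ → ℝ),
      0 < Δx → 0 < Δt → 2 ≤ I → 2 ≤ K → 1 ≤ J → (J : ℝ) * Δt = T →
      (∀ j ≤ J, ∀ i ≤ I, ∀ k ≤ K, u j i k ∈ Set.Icc (0:ℝ) B) →
      (∀ j ≤ J, ∀ i ≤ I, ∀ k ≤ K, U j i k ∈ Set.Icc (0:ℝ) B) →
      -- zero lateral data for the scheme
      (∀ j ≤ J, ∀ i ≤ I, ∀ k ≤ K, (i = 0 ∨ i = I ∨ k = K) → U j i k = 0) →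
      -- (i) CFL
      nuSigma σ * m * B ^ (m - 1) * Δt ≤ Δx ^ σ →
      -- (ii) scheme
      (∀ j, 1 ≤ j → j ≤ J → ∀ i, 0 < i → i < I →
        U j i 0 = U (j-1) i 0
          + nuSigma σ * (Δt / Δx ^ σ) * ((U (j-1) i 1) ^ m - (U (j-1) i 0) ^ m)) →
      -- (iii) truncation
      (∀ j, 1 ≤ j → j ≤ J → ∀ i, 0 < i → i < I →
        |u j i 0 - u (j-1) i 0
            - nuSigma σ * (Δt / Δx ^ σ) * ((u (j-1) i 1) ^ m - (u (j-1) i 0) ^ m)|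
          ≤ C₁ * Δt * (Δt + Δx ^ (2 - σ))) →
      -- (iv) error propagation
      (∀ j ≤ J, ∀ i ≤ I, ∀ k ≤ K,
        (∃ i', 0 < i' ∧ i' < I ∧
          |u j i k - U j i k| ≤ |u j i' 0 - U j i' 0| + C₂ * Δx ^ a)
        ∨ (∃ i' k', i' ≤ I ∧ k' ≤ K ∧ (i' = 0 ∨ i' = I ∨ k' = K) ∧
          |u j i k - U j i k| ≤ |u j i' k' - U j i' k'| + C₂ * Δx ^ a)) →
      -- (v) lateral smallness of the exact solution
      (∀ j ≤ J, ∀ i ≤ I, ∀ k ≤ K, (i = 0 ∨ i = I ∨ k = K) → |u j i k| ≤ C₅ * Δx ^ a) →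
      -- (vi) spatial regularity
      (∀ j ≤ J, ∀ i ≤ I,
        |u j i 1 - u j i 0| ≤ C₃ * Δx ^ σ ∧ |U j i 1 - U j i 0| ≤ C₃ * Δx ^ σ) →
      -- (vii) initial error
      (∀ i ≤ I, ∀ k ≤ K, |u 0 i k - U 0 i k| ≤ C₄ * Δx ^ a) →
      ∀ j ≤ J, ∀ i ≤ I, ∀ k ≤ K,
        |u j i k - U j i k| ≤ C * (Δt + Δx ^ (2 - σ) + Δx ^ a / Δt) :=
  stmt19_general σ m L T B a C₁ C₂ C₃ C₄ C₅ hσ hm hLip hT hC₁ hC₂ hC₃ hC₄ hC₅
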